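/- arXiv:2106.07887 — 8 statements merged into one kernel-verified Lean document; each statement's English description precedes it below -/
import Mathlib

section
/- Let J be an n_L×N real matrix with full row rank (rank J = n_L) and Q an N×n_L real matrix such that JQ is invertible. Then S := Q (JQ)⁻¹ is the Moore–Penrose pseudoinverse of J if and only if the column space of Q equals the column space of Jᵀ. (Lemma S3: the dynamical inversion equals the pseudoinverse of J exactly when Condition 2 holds.) -/
/-!
With `S = Q (JQ)⁻¹` we have `J S = 1`, so three of the Penrose equations hold automatically and
only the symmetry of the projection `S J` is at stake. For a right inverse `S` of `J`, symmetry of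
`S J` gives `S = Jᵀ Sᵀ S` and `Jᵀ = S J Jᵀ`, hence equal column spaces; conversely, writing
`S = Jᵀ C`, the identity `J Jᵀ C = 1` forces `Cᵀ = C`, so `S J = Jᵀ C J` is symmetric. Finally
`S` and `Q` differ by the invertible factor `(JQ)⁻¹`, so they have the same column space.
-/

open Matrix

/-- `S` is the Moore–Penrose pseudoinverse of `A`: the four Penrose equations. -/
def IsMoorePenrose {m n : Type*} [Fintype m] [Fintype n]
    (A : Matrix m n ℝ) (S : Matrix n m ℝ) : Prop :=
  A * S * A = A ∧ S * A * S = S ∧ (A * S)ᵀ = A * S ∧ (S * A)ᵀ = S * A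

namespace Matrix

variable {l m n R : Type*} [Fintype m] [Fintype n] [CommRing R]

theorem range_mulVecLin_mul_le (A : Matrix l m R) (B : Matrix m n R) :
    LinearMap.range (A * B).mulVecLin ≤ LinearMap.range A.mulVecLin := by
  rw [mulVecLin_mul]
  exact LinearMap.range_comp_le_range _ _

theorem range_mulVecLin_mul_of_isUnit [DecidableEq n] (A : Matrix l n R) {U : Matrix n n R}
    (hU : IsUnit U) : LinearMap.range (A * U).mulVecLin = LinearMap.range A.mulVecLin := by
  obtain ⟨V, hUV⟩ := hU.exists_right_inv
  refine le_antisymm (range_mulVecLin_mul_le _ _) ?_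
  calc LinearMap.range A.mulVecLin
      = LinearMap.range (A * U * V).mulVecLin := by rw [Matrix.mul_assoc, hUV, Matrix.mul_one]
    _ ≤ LinearMap.range (A * U).mulVecLin := range_mulVecLin_mul_le _ _

theorem exists_eq_mul_of_range_mulVecLin_le {A : Matrix l n R} {B : Matrix l m R}
    (h : LinearMap.range A.mulVecLin ≤ LinearMap.range B.mulVecLin) :
    ∃ C : Matrix m n R, A = B * C := by
  classical
  have hcol (j : n) : ∃ c : m → R, B *ᵥ c = A.col j := h ⟨Pi.single j 1, by
    ext i; simp [mulVec_single]⟩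
  choose c hc using hcol
  refine ⟨(of c)ᵀ, ?_⟩
  ext i j
  simpa [mulVec, dotProduct, mul_apply] using (congrFun (hc j) i).symm

theorem isSymm_mul_iff_range_mulVecLin_eq_of_mul_eq_one [DecidableEq m] {J : Matrix m n R}
    {S : Matrix n m R} (hJS : J * S = 1) :
    (S * J).IsSymm ↔ LinearMap.range S.mulVecLin = LinearMap.range Jᵀ.mulVecLin := by
  constructor
  · intro h
    have hS : S = Jᵀ * (Sᵀ * S) := calc
      S = S * J * S := by rw [Matrix.mul_assoc, hJS, Matrix.mul_one]
      _ = Jᵀ * (Sᵀ * S) := by rw [← h.eq, transpose_mul, Matrix.mul_assoc]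
    have hJt : Jᵀ = S * (J * Jᵀ) := calc
      Jᵀ = (J * S * J)ᵀ := by rw [hJS, Matrix.one_mul]
      _ = S * (J * Jᵀ) := by
        rw [transpose_mul, transpose_mul, ← Matrix.mul_assoc, ← transpose_mul, h.eq,
          Matrix.mul_assoc]
    refine le_antisymm ?_ ?_
    · rw [hS]; exact range_mulVecLin_mul_le _ _
    · rw [hJt]; exact range_mulVecLin_mul_le _ _
  · intro h
    obtain ⟨C, rfl⟩ := exists_eq_mul_of_range_mulVecLin_le h.le
    have hC : Cᵀ = C := calc
      Cᵀ = Cᵀ * (J * (Jᵀ * C)) := by rw [hJS, Matrix.mul_one]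
      _ = (J * (Jᵀ * C))ᵀ * C := by
        simp only [transpose_mul, transpose_transpose, Matrix.mul_assoc]
      _ = C := by rw [hJS, transpose_one, Matrix.one_mul]
    change (Jᵀ * C * J)ᵀ = Jᵀ * C * J
    rw [transpose_mul, transpose_mul, hC, transpose_transpose, Matrix.mul_assoc]

end Matrix

theorem isMoorePenrose_iff_isSymm_of_mul_eq_one {m n : Type*} [Fintype m] [Fintype n]
    [DecidableEq m] {A : Matrix m n ℝ} {S : Matrix n m ℝ} (hAS : A * S = 1) :
    IsMoorePenrose A S ↔ (S * A).IsSymm := by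
  simp only [IsMoorePenrose, hAS, Matrix.one_mul, Matrix.mul_assoc, Matrix.mul_one,
    transpose_one, true_and]
  exact Iff.rfl

theorem dynamical_inversion_eq_pinv_iff_general {nL N : ℕ}
    (J : Matrix (Fin nL) (Fin N) ℝ) (Q : Matrix (Fin N) (Fin nL) ℝ)
    (hinv : IsUnit (J * Q)) :
    IsMoorePenrose J (Q * (J * Q)⁻¹) ↔
      LinearMap.range Q.mulVecLin = LinearMap.range Jᵀ.mulVecLin := by
  have hJS : J * (Q * (J * Q)⁻¹) = 1 := by
    rw [← Matrix.mul_assoc, mul_nonsing_inv _ ((isUnit_iff_isUnit_det _).1 hinv)]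
  rw [isMoorePenrose_iff_isSymm_of_mul_eq_one hJS,
    isSymm_mul_iff_range_mulVecLin_eq_of_mul_eq_one hJS,
    range_mulVecLin_mul_of_isUnit _ (isUnit_nonsing_inv_iff.2 hinv)]

/-- Lemma S3: for `J` of full row rank and `JQ` invertible, `Q (JQ)⁻¹` is the
Moore–Penrose pseudoinverse of `J` iff the column space of `Q` equals the
column space of `Jᵀ` (Condition 2). -/
theorem dynamical_inversion_eq_pinv_iff {nL N : ℕ}
    (J : Matrix (Fin nL) (Fin N) ℝ) (Q : Matrix (Fin N) (Fin nL) ℝ)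
    (hrank : J.rank = nL) (hinv : IsUnit (J * Q)) :
    IsMoorePenrose J (Q * (J * Q)⁻¹) ↔
      LinearMap.range Q.mulVecLin = LinearMap.range Jᵀ.mulVecLin :=
  dynamical_inversion_eq_pinv_iff_general J Q hinv
end

section
/- Let J be an n_L×N real matrix with full row rank (rank J = n_L), let Q be an N×n_L real matrix whose column space equals the column space of Jᵀ, and let R be a P×N real matrix satisfying RᵀR = c·I for some c > 0. Then JQ is invertible and (1/c)·R Q (JQ)⁻¹ is the Moore–Penrose pseudoinverse of the matrix J Rᵀ. Consequently, for every output error δ ∈ ℝ^{n_L}, the concatenated steady-state DFC weight update R Q (JQ)⁻¹ δ equals c times the Gauss–Newton update (J Rᵀ)† δ. (Theorem 1: under Conditions 1 and 2, DFC steady-state weight updates align with Gauss–Newton updates for a minibatch size of 1.) -/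
/-!
Condition 2 makes `Q (JQ)⁻¹` a right inverse of `J` whose columns lie in the row space of `J`;
since `J` is injective there, it is the right inverse `Jᵀ (JJᵀ)⁻¹`, which is `J†`.
Condition 1 says that `c^(-1/2) Rᵀ` has orthonormal columns, so `(J Rᵀ)† = c⁻¹ R J†`, and the
pseudoinverse is unique.
-/

open Matrix

namespace Matrix

variable {K : Type*} [Field K] {l m n : Type*} [Fintype l] [Fintype m] [Fintype n]

theorem isUnit_of_rank_eq_card [DecidableEq n] {A : Matrix n n K}
    (h : A.rank = Fintype.card n) : IsUnit A := by
  rw [← mulVec_surjective_iff_isUnit, ← coe_mulVecLin, ← LinearMap.range_eq_top]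
  apply Submodule.eq_top_of_finrank_eq
  rwa [Module.finrank_fintype_fun_eq_card]

theorem isUnit_mul_transpose_of_rank_eq_card {R : Type*} [Field R] [LinearOrder R]
    [IsStrictOrderedRing R] [DecidableEq m] {J : Matrix m n R} (h : J.rank = Fintype.card m) :
    IsUnit (J * Jᵀ) :=
  isUnit_of_rank_eq_card (by rw [rank_self_mul_transpose, h])

omit [Fintype m] in
theorem exists_eq_mul_of_range_le [DecidableEq l] {A : Matrix m n K} {B : Matrix m l K}
    (h : LinearMap.range B.mulVecLin ≤ LinearMap.range A.mulVecLin) :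
    ∃ M : Matrix n l K, B = A * M := by
  choose y hy using fun j => h (LinearMap.mem_range_self B.mulVecLin (Pi.single j 1))
  refine ⟨(of y)ᵀ, ext fun i j => ?_⟩
  have := congrFun (hy j) i
  simp only [mulVecLin_apply, mulVec_single_one] at this
  rw [← col_apply B j i, ← this]
  rfl

theorem isUnit_mul_of_range_eq [DecidableEq m] {A : Matrix m n K} {B C : Matrix n m K}
    (h : LinearMap.range B.mulVecLin = LinearMap.range C.mulVecLin) (hC : IsUnit (A * C)) :
    IsUnit (A * B) := by
  rw [← mulVec_surjective_iff_isUnit, ← coe_mulVecLin, ← LinearMap.range_eq_top] at hC ⊢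
  rwa [mulVecLin_mul, LinearMap.range_comp, h, ← LinearMap.range_comp, ← mulVecLin_mul]

/-- A right inverse of `J` is determined by its column space, as long as `J` is injective on it. -/
theorem mul_mul_inv_eq_of_range_le [DecidableEq m] {J : Matrix m n K} {B Q : Matrix n m K}
    (hQ : LinearMap.range Q.mulVecLin ≤ LinearMap.range B.mulVecLin)
    (hJB : IsUnit (J * B)) (hJQ : IsUnit (J * Q)) :
    Q * (J * Q)⁻¹ = B * (J * B)⁻¹ := by
  obtain ⟨M, hM⟩ := exists_eq_mul_of_range_le hQ
  have hfix : B * (J * B)⁻¹ * J * Q = Q := calc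
    B * (J * B)⁻¹ * J * Q = B * ((J * B)⁻¹ * (J * B)) * M := by
      simp only [hM, Matrix.mul_assoc]
    _ = Q := by rw [nonsing_inv_mul _ ((isUnit_iff_isUnit_det _).1 hJB), Matrix.mul_one, hM]
  calc Q * (J * Q)⁻¹ = B * (J * B)⁻¹ * (J * Q) * (J * Q)⁻¹ := by
        rw [← Matrix.mul_assoc _ J, hfix]
    _ = B * (J * B)⁻¹ := mul_nonsing_inv_cancel_right _ _ ((isUnit_iff_isUnit_det _).1 hJQ)

end Matrix

namespace IsMoorePenrose

variable {m n p : Type*} [Fintype m] [Fintype n] [Fintype p]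

theorem unique {A : Matrix m n ℝ} {S T : Matrix n m ℝ} (hS : IsMoorePenrose A S)
    (hT : IsMoorePenrose A T) : S = T := by
  obtain ⟨hS₁, hS₂, hS₃, hS₄⟩ := hS
  obtain ⟨hT₁, hT₂, hT₃, hT₄⟩ := hT
  have hAS : A * S = A * T := calc
    A * S = (A * S)ᵀ := hS₃.symm
    _ = (A * T * (A * S))ᵀ := by rw [← Matrix.mul_assoc, hT₁]
    _ = A * S * (A * T) := by rw [transpose_mul, hS₃, hT₃]
    _ = A * T := by rw [← Matrix.mul_assoc, hS₁]
  have hSA : S * A = T * A := calc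
    S * A = (S * A)ᵀ := hS₄.symm
    _ = (S * A * (T * A))ᵀ := by rw [Matrix.mul_assoc, ← Matrix.mul_assoc A, hT₁]
    _ = T * A * (S * A) := by rw [transpose_mul, hS₄, hT₄]
    _ = T * A := by rw [Matrix.mul_assoc, ← Matrix.mul_assoc A, hS₁]
  calc S = S * A * S := hS₂.symm
    _ = T * (A * T) := by rw [hSA, Matrix.mul_assoc, hAS]
    _ = T := by rw [← Matrix.mul_assoc, hT₂]

theorem mul_transpose_of_transpose_mul_self_eq_smul_one [DecidableEq n] {J : Matrix m n ℝ}
    {X : Matrix n m ℝ} (hX : IsMoorePenrose J X) {R : Matrix p n ℝ} {c : ℝ} (hc : c ≠ 0)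
    (hR : Rᵀ * R = c • 1) : IsMoorePenrose (J * Rᵀ) (c⁻¹ • (R * X)) := by
  obtain ⟨hX₁, hX₂, hX₃, hX₄⟩ := hX
  have hAS : J * Rᵀ * (c⁻¹ • (R * X)) = J * X := calc
    J * Rᵀ * (c⁻¹ • (R * X)) = c⁻¹ • (J * (Rᵀ * R) * X) := by
      simp only [Matrix.mul_smul, Matrix.mul_assoc]
    _ = J * X := by
      rw [hR, Matrix.mul_smul, Matrix.smul_mul, Matrix.mul_one, smul_smul, inv_mul_cancel₀ hc,
        one_smul]
  have hSA : c⁻¹ • (R * X) * (J * Rᵀ) = c⁻¹ • (R * (X * J) * Rᵀ) := by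
    simp only [Matrix.smul_mul, Matrix.mul_assoc]
  refine ⟨?_, ?_, ?_, ?_⟩
  · rw [hAS, ← Matrix.mul_assoc, hX₁]
  · rw [Matrix.mul_assoc, hAS, Matrix.smul_mul, Matrix.mul_assoc R, ← Matrix.mul_assoc X, hX₂]
  · rw [hAS, hX₃]
  · rw [hSA, transpose_smul, transpose_mul, transpose_mul, transpose_transpose, hX₄]
    simp only [Matrix.mul_assoc]

end IsMoorePenrose

theorem isMoorePenrose_transpose_mul_inv {m n : Type*} [Fintype m] [Fintype n] [DecidableEq m]
    {J : Matrix m n ℝ} (hJ : IsUnit (J * Jᵀ)) : IsMoorePenrose J (Jᵀ * (J * Jᵀ)⁻¹) := by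
  have hright : J * (Jᵀ * (J * Jᵀ)⁻¹) = 1 := by
    rw [← Matrix.mul_assoc, mul_nonsing_inv _ ((isUnit_iff_isUnit_det _).1 hJ)]
  refine ⟨?_, ?_, ?_, ?_⟩
  · rw [hright, Matrix.one_mul]
  · rw [Matrix.mul_assoc, hright, Matrix.mul_one]
  · rw [hright, transpose_one]
  · rw [transpose_mul, transpose_mul, transpose_nonsing_inv, transpose_mul, transpose_transpose,
      Matrix.mul_assoc]

/-- Theorem 1: under Condition 1 (`RᵀR = c I`, equal layer activation norms)
and Condition 2 (column space of `Q` equals column space of `Jᵀ`), with `J`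
of full row rank, `JQ` is invertible, `(1/c) R Q (JQ)⁻¹` is the Moore–Penrose
pseudoinverse of `J Rᵀ`, and hence the concatenated steady-state DFC weight
update `R Q (JQ)⁻¹ δ` equals `c` times the Gauss–Newton update `(J Rᵀ)† δ`. -/
theorem dfc_approximates_gauss_newton {nL N P : ℕ}
    (J : Matrix (Fin nL) (Fin N) ℝ) (Q : Matrix (Fin N) (Fin nL) ℝ)
    (R : Matrix (Fin P) (Fin N) ℝ) (c : ℝ) (hc : 0 < c)
    (hrank : J.rank = nL)
    (hQ : LinearMap.range Q.mulVecLin = LinearMap.range Jᵀ.mulVecLin)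
    (hR : Rᵀ * R = c • (1 : Matrix (Fin N) (Fin N) ℝ)) :
    IsUnit (J * Q) ∧
      IsMoorePenrose (J * Rᵀ) (c⁻¹ • (R * Q * (J * Q)⁻¹)) ∧
      ∀ S : Matrix (Fin P) (Fin nL) ℝ, IsMoorePenrose (J * Rᵀ) S →
        ∀ δ : Fin nL → ℝ, (R * Q * (J * Q)⁻¹) *ᵥ δ = c • (S *ᵥ δ) := by
  have hJJ : IsUnit (J * Jᵀ) :=
    isUnit_mul_transpose_of_rank_eq_card (by rw [hrank, Fintype.card_fin])
  have hJQ : IsUnit (J * Q) := isUnit_mul_of_range_eq hQ hJJ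
  have hMP : IsMoorePenrose (J * Rᵀ) (c⁻¹ • (R * Q * (J * Q)⁻¹)) := by
    rw [Matrix.mul_assoc, mul_mul_inv_eq_of_range_le hQ.le hJJ hJQ]
    exact (isMoorePenrose_transpose_mul_inv hJJ).mul_transpose_of_transpose_mul_self_eq_smul_one
      hc.ne' hR
  refine ⟨hJQ, hMP, fun S hS δ => ?_⟩
  rw [hS.unique hMP, smul_mulVec, smul_smul, mul_inv_cancel₀ hc.ne', one_smul]
end

section
/- Let J be an n_L×N real matrix such that JJᵀ is invertible, M a P×P symmetric positive definite real matrix, and R a P×N real matrix satisfying Rᵀ M⁻² R = I (the N×N identity). For an output error δ ∈ ℝ^{n_L}, define x* := M⁻² R Jᵀ (JJᵀ)⁻¹ δ. Then J Rᵀ x* = δ, and for every x ∈ ℝ^P with J Rᵀ x = δ one has ‖M x*‖₂ ≤ ‖M x‖₂, with equality if and only if x = x*. (Theorem 2: the DFC steady-state weight update is the weighted minimum-norm update of the network weights that makes the linearized feedforward output reach its target.) -/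
open Matrix

/-- The Euclidean (`L²`) norm on `ℝ^n`. -/
noncomputable def euclideanNorm {n : Type*} [Fintype n] (x : n → ℝ) : ℝ :=
  Real.sqrt (∑ i, x i ^ 2)

/-!
Substituting `z = M y` turns the problem into the unweighted one for `B := J Rᵀ M⁻¹`: the
constraint becomes `B z = δ`, the objective `‖z‖₂`, and `Rᵀ M⁻² R = I` together with the
symmetry of `M` gives `B Bᵀ = J Jᵀ`, so that `M x* = Bᵀ (B Bᵀ)⁻¹ δ`. This vector lies in the row
space of `B`, hence is orthogonal to the kernel of `B`, which contains `z - M x*` for every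
feasible `z`; Pythagoras gives `‖z‖² = ‖M x*‖² + ‖z - M x*‖²`.
-/

section MinimumNorm

variable {m n : Type*} [Fintype m] [Fintype n]

lemma euclideanNorm_eq_sqrt_dotProduct (x : n → ℝ) : euclideanNorm x = √(x ⬝ᵥ x) := by
  simp only [euclideanNorm, dotProduct, sq]

lemma dotProduct_self_nonneg_real (x : n → ℝ) : 0 ≤ x ⬝ᵥ x :=
  Finset.sum_nonneg fun i _ => mul_self_nonneg (x i)

lemma euclideanNorm_le_and_eq_iff_of_dotProduct_sub_eq_zero {w z : n → ℝ}
    (h : w ⬝ᵥ (z - w) = 0) :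
    euclideanNorm w ≤ euclideanNorm z ∧ (euclideanNorm w = euclideanNorm z ↔ z = w) := by
  have pythagoras : z ⬝ᵥ z = w ⬝ᵥ w + (z - w) ⬝ᵥ (z - w) := by
    have hsymm : (z - w) ⬝ᵥ w = 0 := by rw [dotProduct_comm, h]
    calc z ⬝ᵥ z = (w + (z - w)) ⬝ᵥ (w + (z - w)) := by rw [add_sub_cancel]
      _ = w ⬝ᵥ w + (z - w) ⬝ᵥ (z - w) := by
        simp only [add_dotProduct, dotProduct_add, h, hsymm, add_zero, zero_add]
  simp only [euclideanNorm_eq_sqrt_dotProduct]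
  refine ⟨Real.sqrt_le_sqrt ?_, ?_⟩
  · linarith [dotProduct_self_nonneg_real (z - w)]
  · rw [Real.sqrt_inj (dotProduct_self_nonneg_real w) (dotProduct_self_nonneg_real z),
      pythagoras, left_eq_add, dotProduct_self_eq_zero, sub_eq_zero]

lemma transpose_mulVec_dotProduct_sub_eq_zero {α : Type*} [CommRing α] (B : Matrix m n α)
    (c : m → α) {z w : n → α} (h : B *ᵥ z = B *ᵥ w) : (Bᵀ *ᵥ c) ⬝ᵥ (z - w) = 0 := by
  rw [dotProduct_comm, dotProduct_mulVec, vecMul_transpose, mulVec_sub, h, sub_self,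
    zero_dotProduct]

variable [DecidableEq m]

lemma mulVec_transpose_mul_inv_mulVec {α : Type*} [CommRing α] (B : Matrix m n α)
    (hB : IsUnit (B * Bᵀ)) (δ : m → α) :
    B *ᵥ ((Bᵀ * (B * Bᵀ)⁻¹) *ᵥ δ) = δ := by
  rw [mulVec_mulVec, ← Matrix.mul_assoc, mul_nonsing_inv _ ((isUnit_iff_isUnit_det _).mp hB),
    one_mulVec]

theorem euclideanNorm_transpose_mul_inv_mulVec_le_and_eq_iff (B : Matrix m n ℝ)
    (hB : IsUnit (B * Bᵀ)) (δ : m → ℝ) {z : n → ℝ} (hz : B *ᵥ z = δ) :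
    euclideanNorm ((Bᵀ * (B * Bᵀ)⁻¹) *ᵥ δ) ≤ euclideanNorm z ∧
      (euclideanNorm ((Bᵀ * (B * Bᵀ)⁻¹) *ᵥ δ) = euclideanNorm z ↔
        z = (Bᵀ * (B * Bᵀ)⁻¹) *ᵥ δ) := by
  have horth := transpose_mulVec_dotProduct_sub_eq_zero B ((B * Bᵀ)⁻¹ *ᵥ δ)
    (hz.trans (mulVec_transpose_mul_inv_mulVec B hB δ).symm)
  rw [mulVec_mulVec] at horth
  exact euclideanNorm_le_and_eq_iff_of_dotProduct_sub_eq_zero horth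

end MinimumNorm

/-- Theorem 2: with `JJᵀ` invertible, `M` symmetric positive definite and
`Rᵀ M⁻² R = I`, the DFC steady-state weight update
`x* = M⁻² R Jᵀ (JJᵀ)⁻¹ δ` satisfies the target constraint `J Rᵀ x* = δ`
and is the unique minimizer of the weighted norm `‖Mx‖₂` among all updates
satisfying the constraint. -/
theorem dfc_weighted_minimum_norm_updates {nL N P : ℕ}
    (J : Matrix (Fin nL) (Fin N) ℝ) (M : Matrix (Fin P) (Fin P) ℝ)
    (R : Matrix (Fin P) (Fin N) ℝ)
    (hJJ : IsUnit (J * Jᵀ)) (hM : M.PosDef)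
    (hR : Rᵀ * (M⁻¹ * M⁻¹) * R = (1 : Matrix (Fin N) (Fin N) ℝ))
    (δ : Fin nL → ℝ) :
    let x := ((M⁻¹ * M⁻¹) * R * Jᵀ * (J * Jᵀ)⁻¹) *ᵥ δ
    (J * Rᵀ) *ᵥ x = δ ∧
      ∀ y : Fin P → ℝ, (J * Rᵀ) *ᵥ y = δ →
        euclideanNorm (M *ᵥ x) ≤ euclideanNorm (M *ᵥ y) ∧
          (euclideanNorm (M *ᵥ x) = euclideanNorm (M *ᵥ y) ↔ y = x) := by
  intro x
  set B := J * Rᵀ * M⁻¹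
  have hMdet : IsUnit M.det := (isUnit_iff_isUnit_det M).mp hM.isUnit
  have hBT : Bᵀ = M⁻¹ * R * Jᵀ := by
    rw [transpose_mul, transpose_mul, transpose_transpose, transpose_nonsing_inv,
      (isHermitian_iff_isSymm.mp hM.isHermitian).eq, Matrix.mul_assoc]
  have hBBT : B * Bᵀ = J * Jᵀ := by
    rw [hBT, show B * (M⁻¹ * R * Jᵀ) = J * (Rᵀ * (M⁻¹ * M⁻¹) * R) * Jᵀ by
      simp only [B, Matrix.mul_assoc], hR, Matrix.mul_one]
  have hBM (y : Fin P → ℝ) : B *ᵥ (M *ᵥ y) = (J * Rᵀ) *ᵥ y := by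
    rw [mulVec_mulVec, Matrix.mul_assoc, nonsing_inv_mul _ hMdet, Matrix.mul_one]
  have hMx : M *ᵥ x = (Bᵀ * (B * Bᵀ)⁻¹) *ᵥ δ := by
    rw [mulVec_mulVec, hBBT, hBT]
    simp only [Matrix.mul_assoc, mul_nonsing_inv_cancel_left _ _ hMdet]
  have hB : IsUnit (B * Bᵀ) := hBBT ▸ hJJ
  refine ⟨by rw [← hBM, hMx, mulVec_transpose_mul_inv_mulVec B hB], fun y hy => ?_⟩
  rw [← (mulVec_injective_iff_isUnit.mpr hM.isUnit).eq_iff (a := y), hMx]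
  exact euclideanNorm_transpose_mul_inv_mulVec_le_and_eq_iff B hB δ ((hBM y).trans hy)
end

section
/- Let J be an n_L×N real matrix, Q an N×n_L real matrix with JQ invertible, M a P×P symmetric positive definite real matrix, and R, R' two P×N real matrices satisfying Rᵀ M⁻² R' = I (the N×N identity). Then for every nonzero δ ∈ ℝ^{n_L}, the inner product between the loss-gradient update direction R Jᵀ δ and the DFC steady-state update direction M⁻² R' Q (JQ)⁻¹ δ equals ‖δ‖₂² > 0; in particular, the DFC steady-state weight update with layer-specific learning rates lies within 90 degrees of the loss gradient direction. (Proposition 1: DFC steady-state updates are descent directions for arbitrary feedback weights.) -/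
open Matrix

namespace Matrix

variable {m n p R : Type*} [Fintype m] [Fintype n] [Fintype p] [DecidableEq n]

theorem mulVec_dotProduct_mulVec_of_transpose_mul_eq_one [CommSemiring R]
    {A B : Matrix m n R} (h : Aᵀ * B = 1) (x : n → R) :
    (A *ᵥ x) ⬝ᵥ (B *ᵥ x) = x ⬝ᵥ x := by
  rw [dotProduct_comm, ← dotProduct_transpose_mulVec, mulVec_mulVec, h, one_mulVec]

variable [DecidableEq m] [CommRing R]

theorem transpose_mul_mul_nonsing_inv_eq_one
    {A A' : Matrix p n R} (X : Matrix p p R) (J : Matrix m n R) (Q : Matrix n m R)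
    (hA : Aᵀ * X * A' = 1) (hJQ : IsUnit (J * Q)) :
    (A * Jᵀ)ᵀ * (X * A' * Q * (J * Q)⁻¹) = 1 := by
  calc (A * Jᵀ)ᵀ * (X * A' * Q * (J * Q)⁻¹)
      = J * (Aᵀ * X * A') * Q * (J * Q)⁻¹ := by
        simp only [transpose_mul, transpose_transpose, Matrix.mul_assoc]
    _ = 1 := by
        rw [hA, Matrix.mul_one, mul_nonsing_inv _ ((isUnit_iff_isUnit_det _).mp hJQ)]

end Matrix

theorem dfc_descent_direction_general {nL N P : ℕ}
    (J : Matrix (Fin nL) (Fin N) ℝ) (Q : Matrix (Fin N) (Fin nL) ℝ)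
    (M : Matrix (Fin P) (Fin P) ℝ) (R R' : Matrix (Fin P) (Fin N) ℝ)
    (hJQ : IsUnit (J * Q))
    (hRR : Rᵀ * (M⁻¹ * M⁻¹) * R' = (1 : Matrix (Fin N) (Fin N) ℝ))
    (δ : Fin nL → ℝ) (hδ : δ ≠ 0) :
    ((R * Jᵀ) *ᵥ δ) ⬝ᵥ (((M⁻¹ * M⁻¹) * R' * Q * (J * Q)⁻¹) *ᵥ δ) = δ ⬝ᵥ δ ∧
      0 < δ ⬝ᵥ δ :=
  ⟨mulVec_dotProduct_mulVec_of_transpose_mul_eq_one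
      (transpose_mul_mul_nonsing_inv_eq_one _ J Q hRR hJQ) δ,
    by simpa only [star_trivial] using dotProduct_self_star_pos_iff.mpr hδ⟩

/-- Proposition 1: for arbitrary feedback weights `Q` with `JQ` invertible,
the inner product between the loss-gradient (backprop) update `R Jᵀ δ` and the
DFC steady-state update with layer-specific learning rates
`M⁻² R' Q (JQ)⁻¹ δ` equals `‖δ‖₂² > 0`; hence the DFC update lies within 90
degrees of the loss gradient direction. -/
theorem dfc_descent_direction {nL N P : ℕ}
    (J : Matrix (Fin nL) (Fin N) ℝ) (Q : Matrix (Fin N) (Fin nL) ℝ)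
    (M : Matrix (Fin P) (Fin P) ℝ) (R R' : Matrix (Fin P) (Fin N) ℝ)
    (hJQ : IsUnit (J * Q)) (hM : M.PosDef)
    (hRR : Rᵀ * (M⁻¹ * M⁻¹) * R' = (1 : Matrix (Fin N) (Fin N) ℝ))
    (δ : Fin nL → ℝ) (hδ : δ ≠ 0) :
    ((R * Jᵀ) *ᵥ δ) ⬝ᵥ (((M⁻¹ * M⁻¹) * R' * Q * (J * Q)⁻¹) *ᵥ δ) = δ ⬝ᵥ δ ∧
      0 < δ ⬝ᵥ δ :=
  dfc_descent_direction_general J Q M R R' hJQ hRR δ hδ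
end

section
/- Let Q be an N×n_L real matrix (N ≥ n_L) with singular value decomposition Q = U Σ Vᵀ, where U is an N×N orthogonal matrix, V is an n_L×n_L orthogonal matrix, and Σ is the N×n_L matrix whose top n_L×n_L block is an invertible diagonal matrix Σ_D and whose remaining rows are zero. Let J be an n_L×N real matrix, define J̃ := Vᵀ J U, and write J̃ = [J̃₁ J̃₂] in block form with J̃₁ of size n_L×n_L. If J̃₁ is invertible, then JQ is invertible and Q (JQ)⁻¹ = U · [J̃₁⁻¹ ; 0] · Vᵀ, where [J̃₁⁻¹ ; 0] is the N×n_L matrix with top block J̃₁⁻¹ and zero below. (Lemma S6: the dynamical inversion Q(JQ)⁻¹ is a generalized inverse of J constrained by the column space of Q.) -/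
/-!
Write `Q = P S` with `P = U [I ; 0]` and `S = Σ_D Vᵀ`. Since `S` is invertible it cancels:
`Q (J Q)⁻¹ = P S S⁻¹ (J P)⁻¹ = P (J P)⁻¹`. Because `V Vᵀ = 1`, `J P` is the left block of
`J U = V J̃`, namely `V J̃₁`, whose inverse is `J̃₁⁻¹ Vᵀ`; and `P J̃₁⁻¹ = U [J̃₁⁻¹ ; 0]`.
-/

open Matrix

namespace Matrix

variable {R l m n₁ n₂ : Type*}

theorem toCols₁_mul [NonUnitalNonAssocSemiring R] [Fintype m]
    (A : Matrix l m R) (B : Matrix m (n₁ ⊕ n₂) R) :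
    (A * B).toCols₁ = A * B.toCols₁ :=
  rfl

theorem mul_fromRows_one_zero [Semiring R] [Fintype n₁] [Fintype n₂] [DecidableEq n₁]
    (B : Matrix m (n₁ ⊕ n₂) R) :
    B * fromRows (1 : Matrix n₁ n₁ R) (0 : Matrix n₂ n₁ R) = B.toCols₁ := by
  rw [← fromCols_toCols B, fromCols_mul_fromRows, Matrix.mul_one, Matrix.mul_zero, add_zero,
    toCols₁_fromCols]

theorem mul_mul_inv_mul_mul_of_isUnit [CommRing R] [Fintype m] [Fintype n₁] [DecidableEq n₁]
    (P : Matrix m n₁ R) (S : Matrix n₁ n₁ R) (J : Matrix n₁ m R) (hS : IsUnit S) :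
    P * S * (J * (P * S))⁻¹ = P * (J * P)⁻¹ := by
  rw [← Matrix.mul_assoc J, Matrix.mul_inv_rev, ← Matrix.mul_assoc, Matrix.mul_assoc P,
    mul_nonsing_inv _ ((isUnit_iff_isUnit_det S).mp hS), Matrix.mul_one]

end Matrix

theorem dynamical_inversion_generalized_inverse_general {nL k : ℕ}
    (U : Matrix (Fin nL ⊕ Fin k) (Fin nL ⊕ Fin k) ℝ)
    (V : Matrix (Fin nL) (Fin nL) ℝ)
    (hV : Vᵀ * V = 1)
    (d : Fin nL → ℝ) (hd : ∀ i, d i ≠ 0)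
    (Q : Matrix (Fin nL ⊕ Fin k) (Fin nL) ℝ)
    (hQ : Q = U * Matrix.fromRows (Matrix.diagonal d) (0 : Matrix (Fin k) (Fin nL) ℝ) * Vᵀ)
    (J : Matrix (Fin nL) (Fin nL ⊕ Fin k) ℝ)
    (hJ1 : IsUnit ((Vᵀ * J * U).toCols₁)) :
    IsUnit (J * Q) ∧
      Q * (J * Q)⁻¹ = U * Matrix.fromRows ((Vᵀ * J * U).toCols₁)⁻¹ (0 : Matrix (Fin k) (Fin nL) ℝ) * Vᵀ := by
  set A := (Vᵀ * J * U).toCols₁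
  set P := U * fromRows (1 : Matrix (Fin nL) (Fin nL) ℝ) (0 : Matrix (Fin k) (Fin nL) ℝ)
  have hVunit : IsUnit V := (isUnit_iff_isUnit_det V).mpr (isUnit_det_of_left_inverse hV)
  have hS : IsUnit (diagonal d * Vᵀ) :=
    (isUnit_diagonal.mpr (Pi.isUnit_iff.mpr fun i => (hd i).isUnit)).mul
      ((isUnit_iff_isUnit_det Vᵀ).mpr (isUnit_det_of_right_inverse hV))
  have hQP : Q = P * (diagonal d * Vᵀ) := by
    simp only [hQ, P, Matrix.mul_assoc, fromRows_mul, Matrix.one_mul, Matrix.zero_mul]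
  have hJP : J * P = V * A :=
    calc J * P = (J * U).toCols₁ := by rw [← Matrix.mul_assoc, mul_fromRows_one_zero]
      _ = V * (Vᵀ * (J * U)).toCols₁ := by
        rw [toCols₁_mul Vᵀ, ← Matrix.mul_assoc, mul_eq_one_comm.mp hV, Matrix.one_mul]
      _ = V * A := by rw [← Matrix.mul_assoc]
  refine ⟨?_, ?_⟩
  · rw [hQP, ← Matrix.mul_assoc, hJP]
    exact (hVunit.mul hJ1).mul hS
  · rw [hQP, mul_mul_inv_mul_mul_of_isUnit _ _ _ hS, hJP, Matrix.mul_inv_rev, inv_eq_left_inv hV,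
      ← Matrix.mul_assoc, Matrix.mul_assoc U, fromRows_mul, Matrix.one_mul, Matrix.zero_mul]

/-- Lemma S6: if `Q = U Σ Vᵀ` is a singular value decomposition of `Q` (with
`Σ = [Σ_D ; 0]`, `Σ_D` invertible diagonal), `J̃ = Vᵀ J U = [J̃₁ J̃₂]` and `J̃₁`
is invertible, then `JQ` is invertible and `Q (JQ)⁻¹ = U [J̃₁⁻¹ ; 0] Vᵀ`, a
generalized inverse of `J` constrained by the column space of `Q`. -/
theorem dynamical_inversion_generalized_inverse {nL k : ℕ}
    (U : Matrix (Fin nL ⊕ Fin k) (Fin nL ⊕ Fin k) ℝ)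
    (V : Matrix (Fin nL) (Fin nL) ℝ)
    (hU : Uᵀ * U = 1) (hV : Vᵀ * V = 1)
    (d : Fin nL → ℝ) (hd : ∀ i, d i ≠ 0)
    (Q : Matrix (Fin nL ⊕ Fin k) (Fin nL) ℝ)
    (hQ : Q = U * Matrix.fromRows (Matrix.diagonal d) (0 : Matrix (Fin k) (Fin nL) ℝ) * Vᵀ)
    (J : Matrix (Fin nL) (Fin nL ⊕ Fin k) ℝ)
    (hJ1 : IsUnit ((Vᵀ * J * U).toCols₁)) :
    IsUnit (J * Q) ∧
      Q * (J * Q)⁻¹ = U * Matrix.fromRows ((Vᵀ * J * U).toCols₁)⁻¹ (0 : Matrix (Fin k) (Fin nL) ℝ) * Vᵀ :=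
  dynamical_inversion_generalized_inverse_general U V hV d hd Q hQ J hJ1
end

section
/- Let J be an n_L×N real matrix and let α, β, τ_u be strictly positive real numbers. Then JJᵀ + α β τ_u · I is invertible, and Q* := (α/2) · Jᵀ (JJᵀ + α β τ_u · I)⁻¹ is the unique N×n_L real matrix Q satisfying the stationarity equation −(1/(τ_u α)) · Q (JJᵀ) + (1/(2 τ_u)) · Jᵀ − β · Q = 0. -/
open Matrix

/-- Theorem 3, steady-state part: `JJᵀ + αβτ_u I` is invertible and
`Q* = (α/2) Jᵀ (JJᵀ + αβτ_u I)⁻¹` is the unique matrix satisfying the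
stationarity equation of the first-moment feedback weight dynamics
`−(1/(τ_u α)) Q JJᵀ + (1/(2τ_u)) Jᵀ − β Q = 0`. -/
theorem feedback_weights_steady_state {nL N : ℕ}
    (J : Matrix (Fin nL) (Fin N) ℝ)
    (α β τu : ℝ) (hα : 0 < α) (hβ : 0 < β) (hτu : 0 < τu) :
    IsUnit (J * Jᵀ + (α * β * τu) • (1 : Matrix (Fin nL) (Fin nL) ℝ)) ∧
      (-(1 / (τu * α)) • ((α / 2) • (Jᵀ * (J * Jᵀ + (α * β * τu) • 1)⁻¹) * (J * Jᵀ))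
          + (1 / (2 * τu)) • Jᵀ
          - β • ((α / 2) • (Jᵀ * (J * Jᵀ + (α * β * τu) • 1)⁻¹)) = 0) ∧
      ∀ Q : Matrix (Fin N) (Fin nL) ℝ,
        -(1 / (τu * α)) • (Q * (J * Jᵀ)) + (1 / (2 * τu)) • Jᵀ - β • Q = 0 →
        Q = (α / 2) • (Jᵀ * (J * Jᵀ + (α * β * τu) • 1)⁻¹) := by
  set M : Matrix (Fin nL) (Fin nL) ℝ := J * Jᵀ with hM
  set A : Matrix (Fin nL) (Fin nL) ℝ := M + (α * β * τu) • 1 with hA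
  have hγ : 0 < α * β * τu := by positivity
  -- A is positive definite, hence a unit
  have hMps : M.PosSemidef := by
    have := Matrix.posSemidef_self_mul_conjTranspose J
    simpa [hM, Matrix.conjTranspose_eq_transpose_of_trivial] using this
  have hsm : ((α * β * τu) • (1 : Matrix (Fin nL) (Fin nL) ℝ)).PosDef := by
    rw [Matrix.smul_one_eq_diagonal]
    exact Matrix.posDef_diagonal_iff.mpr fun i => hγ
  have hApd : A.PosDef := Matrix.PosDef.posSemidef_add hMps hsm
  have hAunit : IsUnit A := hApd.isUnit
  have hAdet : IsUnit A.det := (Matrix.isUnit_iff_isUnit_det A).mp hAunit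
  -- key: Q satisfies the stationarity equation iff Q * A = (α/2) • Jᵀ
  have key : ∀ Q : Matrix (Fin N) (Fin nL) ℝ,
      (-(1 / (τu * α)) • (Q * M) + (1 / (2 * τu)) • Jᵀ - β • Q = 0) ↔
      Q * A = (α / 2) • Jᵀ := by
    intro Q
    have hQA : Q * A = Q * M + (α * β * τu) • Q := by
      rw [hA, Matrix.mul_add, Matrix.mul_smul, Matrix.mul_one]
    constructor
    · intro h
      have h' := congrArg (fun X => (-(τu * α)) • X) h
      simp only [smul_add, smul_sub, smul_smul, smul_zero] at h'
      rw [show -(τu * α) * -(1 / (τu * α)) = 1 by field_simp,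
          show -(τu * α) * (1 / (2 * τu)) = -(α / 2) by field_simp,
          show -(τu * α) * β = -(α * β * τu) by ring,
          one_smul, neg_smul, neg_smul, sub_neg_eq_add] at h'
      have h0 : Q * M + (α * β * τu) • Q - (α / 2) • Jᵀ = 0 := by
        rw [← h']; abel
      rw [hQA]
      exact sub_eq_zero.mp h0
    · intro h
      have h' : Q * M = (α / 2) • Jᵀ - (α * β * τu) • Q := by
        rw [← h, hQA]; abel
      rw [h', smul_sub, smul_smul, smul_smul]
      rw [show -(1 / (τu * α)) * (α / 2) = -(1 / (2 * τu)) by field_simp,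
          show -(1 / (τu * α)) * (α * β * τu) = -β by field_simp]
      simp only [neg_smul, neg_sub_neg]
      abel
  have hQstar : ((α / 2) • (Jᵀ * A⁻¹)) * A = (α / 2) • Jᵀ := by
    rw [Matrix.smul_mul, Matrix.mul_assoc, Matrix.nonsing_inv_mul A hAdet, Matrix.mul_one]
  refine ⟨hAunit, (key _).mpr hQstar, fun Q hQ => ?_⟩
  have hQA : Q * A = (α / 2) • Jᵀ := (key Q).mp hQ
  calc Q = Q * A * A⁻¹ := by
        rw [Matrix.mul_assoc, Matrix.mul_nonsing_inv A hAdet, Matrix.mul_one]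
    _ = (α / 2) • (Jᵀ * A⁻¹) := by rw [hQA, Matrix.smul_mul]
end

section
/- Let J be an n_L×N real matrix and let α, β, τ_u, τ_Q be strictly positive real numbers, and set Q* := (α/2) · Jᵀ (JJᵀ + α β τ_u · I)⁻¹. Then every differentiable matrix-valued function Q : ℝ → ℝ^{N×n_L} satisfying the linear matrix differential equation τ_Q Q′(t) = −(1/(τ_u α)) · Q(t) (JJᵀ) + (1/(2 τ_u)) · Jᵀ − β · Q(t) for all t converges to Q* as t → ∞, for every initial condition. (Theorem 3, convergence part: the first-moment dynamics of the feedback weights under the noisy anti-Hebbian plasticity rule are globally convergent to the damped pseudoinverse configuration.) -/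
open Matrix Filter

attribute [local instance] Matrix.normedAddCommGroup Matrix.normedSpace

/-! The damped pseudoinverse `Q*` is a stationary point of the dynamics, because
`Q* (JJᵀ + αβτ_u I) = (α/2) Jᵀ`. The error `E = Q - Q*` therefore obeys the homogeneous
equation `τ_Q E' = -E ((1/(τ_u α)) JJᵀ + β I)`. Since `JJᵀ` is positive semidefinite, every row
`e` of `E` satisfies `⟪e, e'⟫ ≤ -(β/τ_Q) ‖e‖²`, so `‖e‖²` decays like `exp (-2βt/τ_Q)` by
Grönwall's inequality. -/

theorem le_mul_exp_of_hasDerivAt_le_mul {f f' : ℝ → ℝ} {K t : ℝ}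
    (hf : ∀ t, HasDerivAt f (f' t) t) (hf' : ∀ t, f' t ≤ K * f t) (ht : 0 ≤ t) :
    f t ≤ f 0 * Real.exp (K * t) := by
  have := le_gronwallBound_of_liminf_deriv_right_le (ε := 0) (a := 0) (b := t)
    (fun x _ => (hf x).continuousAt.continuousWithinAt)
    (fun x _ r hr => (hf x).hasDerivWithinAt.liminf_right_slope_le hr) le_rfl
    (fun x _ => by simpa using hf' x) t ⟨ht, le_rfl⟩
  simpa [gronwallBound_ε0] using this

theorem tendsto_zero_of_hasDerivAt_le_neg_mul {f f' : ℝ → ℝ} {k : ℝ} (hk : 0 < k)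
    (hf : ∀ t, HasDerivAt f (f' t) t) (hf' : ∀ t, f' t ≤ -k * f t) (hf_nonneg : ∀ t, 0 ≤ f t) :
    Tendsto f atTop (nhds 0) := by
  have hexp : Tendsto (fun t => f 0 * Real.exp (-k * t)) atTop (nhds 0) := by
    simpa using (Real.tendsto_exp_neg_atTop_nhds_zero.comp
      (tendsto_id.const_mul_atTop hk)).const_mul (f 0)
  exact squeeze_zero' (.of_forall hf_nonneg)
    ((eventually_ge_atTop 0).mono fun t ht => le_mul_exp_of_hasDerivAt_le_mul hf hf' ht) hexp

theorem tendsto_zero_of_inner_le_neg_mul_norm_sq {H : Type*} [NormedAddCommGroup H]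
    [InnerProductSpace ℝ H] {x x' : ℝ → H} {c : ℝ} (hc : 0 < c)
    (hx : ∀ t, HasDerivAt x (x' t) t) (hdiss : ∀ t, inner ℝ (x t) (x' t) ≤ -c * ‖x t‖ ^ 2) :
    Tendsto x atTop (nhds 0) := by
  have hsq : Tendsto (fun t => ‖x t‖ ^ 2) atTop (nhds 0) := by
    refine tendsto_zero_of_hasDerivAt_le_neg_mul (f' := fun t => 2 * inner ℝ (x t) (x' t))
      (k := 2 * c) (by positivity) (fun t => ?_) (fun t => ?_) (fun t => by positivity)
    · simpa using (hx t).norm_sq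
    · linarith [hdiss t]
  rw [tendsto_zero_iff_norm_tendsto_zero]
  simpa using hsq.sqrt

section Matrix

variable {m n k : Type*} [Fintype n] [Fintype k]

theorem vecMul_mul_transpose_dotProduct_self_nonneg (J : Matrix n k ℝ) (u : n → ℝ) :
    0 ≤ (u ᵥ* (J * Jᵀ)) ⬝ᵥ u := by
  rw [← vecMul_vecMul, vecMul_transpose, dotProduct_comm, dotProduct_mulVec]
  exact Fintype.sum_nonneg fun _ => mul_self_nonneg _

theorem posDef_mul_transpose_add_smul_one [Fintype m] [DecidableEq m] (J : Matrix m n ℝ) {c : ℝ}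
    (hc : 0 < c) : (J * Jᵀ + c • 1).PosDef := by
  refine PosDef.posSemidef_add ?_ (PosDef.one.smul hc)
  simpa using posSemidef_self_mul_conjTranspose J

theorem damped_pseudoinverse_stationary [Fintype m] [DecidableEq m] (J : Matrix m n ℝ) {α β τu : ℝ}
    (hα : 0 < α) (hβ : 0 < β) (hτu : 0 < τu) :
    (1 / (τu * α)) • ((α / 2) • (Jᵀ * (J * Jᵀ + (α * β * τu) • 1)⁻¹) * (J * Jᵀ)) +
      β • ((α / 2) • (Jᵀ * (J * Jᵀ + (α * β * τu) • 1)⁻¹)) = (1 / (2 * τu)) • Jᵀ := by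
  set M := J * Jᵀ + (α * β * τu) • 1
  have hM : IsUnit M.det :=
    (isUnit_iff_isUnit_det M).mp (posDef_mul_transpose_add_smul_one J (by positivity)).isUnit
  have hresolvent : Jᵀ * M⁻¹ * (J * Jᵀ) = Jᵀ - (α * β * τu) • (Jᵀ * M⁻¹) := by
    have h := nonsing_inv_mul_cancel_right M Jᵀ hM
    rwa [Matrix.mul_add, Matrix.mul_smul, Matrix.mul_one, ← eq_sub_iff_add_eq] at h
  rw [smul_mul, hresolvent]
  match_scalars <;> field_simp
  ring

theorem tendsto_zero_of_hasDerivAt_eq_neg_mul_transpose {J : Matrix n k ℝ}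
    {E E' : ℝ → Matrix m n ℝ} {τ a b : ℝ} (hτ : 0 < τ) (ha : 0 ≤ a) (hb : 0 < b)
    (hE : ∀ t, HasDerivAt E (E' t) t)
    (hode : ∀ t, τ • E' t = -a • (E t * (J * Jᵀ)) - b • E t) :
    Tendsto E atTop (nhds 0) := by
  refine tendsto_pi_nhds.2 fun i => ?_
  have hrow : ∀ t, HasDerivAt (fun s => WithLp.toLp 2 (E s i)) (WithLp.toLp 2 (E' t i)) t :=
    fun t => (PiLp.continuousLinearEquiv 2 ℝ fun _ : n => ℝ).symm.hasFDerivAt.comp_hasDerivAt t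
      (hasDerivAt_pi.1 (hE t) i)
  have hdiss : ∀ t, inner ℝ (WithLp.toLp 2 (E t i)) (WithLp.toLp 2 (E' t i)) ≤
      -(b / τ) * ‖WithLp.toLp 2 (E t i)‖ ^ 2 := by
    intro t
    have hrow_ode : τ • E' t i = -a • (E t i ᵥ* (J * Jᵀ)) - b • E t i := by
      rw [← mul_apply_eq_vecMul]
      exact congrFun (hode t) i
    have hdot := congrArg (· ⬝ᵥ E t i) hrow_ode
    simp only [smul_dotProduct, sub_dotProduct, smul_eq_mul] at hdot
    simp only [← real_inner_self_eq_norm_sq, EuclideanSpace.inner_toLp_toLp, star_trivial]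
    rw [neg_mul, div_mul_eq_mul_div, ← neg_div, le_div_iff₀ hτ]
    nlinarith [vecMul_mul_transpose_dotProduct_self_nonneg J (E t i)]
  have hlim := tendsto_zero_of_inner_le_neg_mul_norm_sq (by positivity) hrow hdiss
  exact (by simpa [Function.comp_def] using ((PiLp.continuous_ofLp 2 _).tendsto 0).comp hlim :
    Tendsto (fun s => E s i) atTop (nhds 0))

end Matrix

/-- Theorem 3, convergence part: every solution of the linear first-moment
feedback weight dynamics
`τ_Q Q' = −(1/(τ_u α)) Q JJᵀ + (1/(2τ_u)) Jᵀ − β Q`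
converges, for every initial condition, to the damped pseudoinverse
configuration `Q* = (α/2) Jᵀ (JJᵀ + αβτ_u I)⁻¹`. -/
theorem feedback_weights_convergence {nL N : ℕ}
    (J : Matrix (Fin nL) (Fin N) ℝ)
    (α β τu τQ : ℝ) (hα : 0 < α) (hβ : 0 < β) (hτu : 0 < τu) (hτQ : 0 < τQ) :
    ∀ Q : ℝ → Matrix (Fin N) (Fin nL) ℝ, Differentiable ℝ Q →
      (∀ t, τQ • deriv Q t =
          -(1 / (τu * α)) • (Q t * (J * Jᵀ)) + (1 / (2 * τu)) • Jᵀ - β • Q t) →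
      Tendsto Q atTop
        (nhds ((α / 2) • (Jᵀ * (J * Jᵀ + (α * β * τu) • 1)⁻¹))) := by
  intro Q hQ hode
  set Qs := (α / 2) • (Jᵀ * (J * Jᵀ + (α * β * τu) • 1)⁻¹)
  have herr : ∀ t, τQ • deriv Q t =
      -(1 / (τu * α)) • ((Q t - Qs) * (J * Jᵀ)) - β • (Q t - Qs) := by
    intro t
    rw [hode t, ← damped_pseudoinverse_stationary J hα hβ hτu, Matrix.sub_mul]
    module
  exact tendsto_sub_nhds_zero_iff.1 <|
    tendsto_zero_of_hasDerivAt_eq_neg_mul_transpose hτQ (by positivity) hβ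
      (fun t => (hQ t).hasDerivAt.sub_const Qs) herr
end

section
/- Let μ be the standard Gaussian measure on ℝ^N (the product of N independent standard normal distributions N(0,1)), let J be an n_L×N real matrix, σ a real number, β a real number, and Q₀ a fixed N×n_L real matrix. For ξ ∈ ℝ^N define the noise-induced output error e(ξ) := −σ · Jξ and the feedback weight update ΔQ(ξ) := −(σ ξ) e(ξ)ᵀ − β Q₀. Then the expectation of ΔQ under μ, taken entrywise, equals σ² Jᵀ − β Q₀. (Core expectation computation of the feedback learning rule: anti-Hebbian plasticity between injected noise and the noise-carried output error aligns the feedback weights with the transposed network Jacobian, up to weight decay.) -/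
/-!
The coordinates of `ξ` are independent, centred and of unit variance, so the second moment
matrix `𝔼[ξ ξᵀ]` is the identity. The update is `σ² ξ (Jξ)ᵀ − β Q₀`, whose `(i, j)` entry is
linear in the products `ξ i * ξ k`; taking expectations leaves `σ² J j i − β Q₀ i j`.
-/

open Matrix MeasureTheory ProbabilityTheory

lemma eval_mul_mulVec_eq_sum {ι m : Type*} [Fintype ι] (J : Matrix m ι ℝ) (ξ : ι → ℝ)
    (i : ι) (j : m) : ξ i * (J *ᵥ ξ) j = ∑ k, J j k * (ξ i * ξ k) := by
  simp only [mulVec, dotProduct, Finset.mul_sum, mul_left_comm (ξ i)]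

section PiMoments

variable {ι : Type*} [Fintype ι] {μ : ι → Measure ℝ} [∀ i, IsProbabilityMeasure (μ i)]

lemma integrable_eval_mul_eval_pi (hμ : ∀ i, MemLp id 2 (μ i)) (i k : ι) :
    Integrable (fun ξ : ι → ℝ ↦ ξ i * ξ k) (Measure.pi μ) :=
  ((hμ i).comp_measurePreserving (measurePreserving_eval μ i)).integrable_mul
    ((hμ k).comp_measurePreserving (measurePreserving_eval μ k))

lemma integrable_eval_mul_mulVec_pi {m : Type*} (hμ : ∀ i, MemLp id 2 (μ i))
    (J : Matrix m ι ℝ) (i : ι) (j : m) :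
    Integrable (fun ξ : ι → ℝ ↦ ξ i * (J *ᵥ ξ) j) (Measure.pi μ) := by
  simp_rw [eval_mul_mulVec_eq_sum]
  exact integrable_finsetSum _ fun k _ ↦ (integrable_eval_mul_eval_pi hμ i k).const_mul _

lemma integral_eval_mul_eval_pi [DecidableEq ι] (i k : ι) :
    ∫ ξ : ι → ℝ, ξ i * ξ k ∂Measure.pi μ =
      if i = k then ∫ x, x ^ 2 ∂μ i else (∫ x, x ∂μ i) * ∫ x, x ∂μ k := by
  split_ifs with hik
  · subst hik
    simp_rw [← sq]
    exact integral_comp_eval (X := fun _ ↦ ℝ) (f := fun x ↦ x ^ 2) (by fun_prop)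
  · have hindep := (iIndepFun_pi (X := fun _ (x : ℝ) ↦ x) (μ := μ)
      fun _ ↦ aemeasurable_id').indepFun hik
    rw [hindep.integral_fun_mul_eq_mul_integral (measurable_pi_apply i).aestronglyMeasurable
      (measurable_pi_apply k).aestronglyMeasurable, integral_eval, integral_eval]

end PiMoments

lemma integral_sq_gaussianReal_zero (v : NNReal) : ∫ x, x ^ 2 ∂gaussianReal 0 v = v := by
  rw [← variance_of_integral_eq_zero aemeasurable_id' integral_id_gaussianReal,
    variance_fun_id_gaussianReal]

section StdGaussianPi

variable {ι : Type*} [Fintype ι]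

lemma integral_eval_mul_eval_pi_gaussianReal [DecidableEq ι] (i k : ι) :
    ∫ ξ : ι → ℝ, ξ i * ξ k ∂Measure.pi (fun _ ↦ gaussianReal 0 1) = if i = k then 1 else 0 := by
  simp [integral_eval_mul_eval_pi, integral_sq_gaussianReal_zero, integral_id_gaussianReal]

lemma integral_eval_mul_mulVec_pi_gaussianReal {m : Type*} (J : Matrix m ι ℝ) (i : ι) (j : m) :
    ∫ ξ : ι → ℝ, ξ i * (J *ᵥ ξ) j ∂Measure.pi (fun _ ↦ gaussianReal 0 1) = J j i := by
  classical
  have hint k := integrable_eval_mul_eval_pi (μ := fun _ ↦ gaussianReal 0 1)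
    (fun _ ↦ memLp_id_gaussianReal 2) i k
  simp_rw [eval_mul_mulVec_eq_sum]
  rw [integral_finsetSum _ fun k _ ↦ (hint k).const_mul _]
  simp [integral_const_mul, integral_eval_mul_eval_pi_gaussianReal]

end StdGaussianPi

lemma feedbackUpdate_apply {n m : Type*} [Fintype n] (J : Matrix m n ℝ) (σ β : ℝ)
    (Q₀ : Matrix n m ℝ) (ξ : n → ℝ) (i : n) (j : m) :
    (-(vecMulVec (σ • ξ) (-σ • (J *ᵥ ξ))) - β • Q₀) i j =
      σ ^ 2 * (ξ i * (J *ᵥ ξ) j) - β * Q₀ i j := by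
  simp only [Matrix.sub_apply, Matrix.neg_apply, vecMulVec_apply, Pi.smul_apply, Matrix.smul_apply,
    smul_eq_mul]
  ring

/-- Core expectation computation of the feedback learning rule: with standard
Gaussian noise `ξ` injected into the network, output error `e(ξ) = −σ Jξ` and
anti-Hebbian update `ΔQ(ξ) = −(σξ) e(ξ)ᵀ − β Q₀`, the entrywise expectation of
`ΔQ` equals `σ² Jᵀ − β Q₀`. -/
theorem feedback_learning_expectation {nL N : ℕ}
    (J : Matrix (Fin nL) (Fin N) ℝ) (σ β : ℝ)
    (Q₀ : Matrix (Fin N) (Fin nL) ℝ) :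
    ∀ (i : Fin N) (j : Fin nL),
      (∫ ξ : Fin N → ℝ,
          (-(Matrix.vecMulVec (σ • ξ) (-σ • (J *ᵥ ξ))) - β • Q₀) i j
          ∂(Measure.pi fun _ : Fin N => gaussianReal 0 1)) =
        (σ ^ 2 • Jᵀ - β • Q₀) i j := by
  intro i j
  have hint := integrable_eval_mul_mulVec_pi (μ := fun _ ↦ gaussianReal 0 1)
    (fun _ ↦ memLp_id_gaussianReal 2) J i j
  simp_rw [feedbackUpdate_apply]
  rw [integral_sub (hint.const_mul _) (integrable_const _), integral_const_mul,
    integral_eval_mul_mulVec_pi_gaussianReal]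
  simp
end
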